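/- For even n ≥ 2, the cyclic Latin square graph T_n admits no proper coloring with n + 1 colors; that is, its chromatic number is at least n + 2. -/

import Mathlib

/-- The cyclic Latin square graph of order `n`. -/
def cyclicLatinSquareGraph (n : ℕ) : SimpleGraph (ZMod n × ZMod n) :=
  SimpleGraph.fromRel (fun x y => x.1 = y.1 ∨ x.2 = y.2 ∨ x.1 + x.2 = y.1 + y.2)

/-!
In a proper colouring of `T_n` with `n + 1` colours, some colour class has at least `n` of the
`n²` cells. A colour class meets every row, column and anti-diagonal at most once, so such a class
is a transversal: its rows, its columns and its values `i + j` each run through all of `ZMod n`.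
Summing `i + j` over it gives `S = S + S` for `S = ∑ x : ZMod n, x`, so `S = 0`. But for even
`n = 2m` the sum `S` equals `m`, the unique element of order 2.
-/

open Finset

theorem ZMod.sum_univ_eq_sum_range (n : ℕ) [NeZero n] :
    ∑ x : ZMod n, x = ∑ i ∈ range n, (i : ZMod n) :=
  (sum_nbij' (↑) ZMod.val (by simp) (by simp [ZMod.val_lt])
    (fun _ h => by simp [ZMod.val_natCast_of_lt (mem_range.mp h)]) (by simp) (by simp)).symm

theorem ZMod.sum_univ_add_self (m : ℕ) [NeZero m] : ∑ x : ZMod (m + m), x = m := by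
  have hsum : ∑ i ∈ range (m + m), i = m * (m + m - 1) := by
    rw [sum_range_id, ← two_mul, mul_assoc, Nat.mul_div_cancel_left _ two_pos]
  have hm : ((m + m : ℕ) : ZMod (m + m)) = 0 := ZMod.natCast_self _
  have h1 : 1 ≤ m + m := by have := NeZero.pos m; omega
  rw [ZMod.sum_univ_eq_sum_range, ← Nat.cast_sum, hsum, Nat.cast_mul, Nat.cast_sub h1, hm]
  push_cast at hm ⊢
  linear_combination -hm

theorem ZMod.sum_univ_ne_zero_of_even {n : ℕ} [NeZero n] (hn : Even n) :
    ∑ x : ZMod n, x ≠ 0 := by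
  obtain ⟨m, rfl⟩ := hn
  have : NeZero m := ⟨by rintro rfl; exact NeZero.ne 0 rfl⟩
  rw [ZMod.sum_univ_add_self, Ne, ZMod.natCast_eq_zero_iff]
  exact fun h => absurd (Nat.le_of_dvd (NeZero.pos m) h) (by have := NeZero.pos m; omega)

theorem Finset.sum_eq_sum_univ_of_injOn {α G : Type*} [AddCommMonoid G] [Fintype G]
    {s : Finset α} {f : α → G} (hf : Set.InjOn f s) (hs : Fintype.card G ≤ #s) :
    ∑ x ∈ s, f x = ∑ g, g := by
  classical
  have himage : s.image f = univ := eq_univ_of_card _ <|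
    le_antisymm (card_le_univ _) (by rwa [card_image_of_injOn hf])
  rw [← himage, sum_image hf]

theorem sum_univ_eq_zero_of_transversal {G : Type*} [AddCommGroup G] [Fintype G]
    {s : Finset (G × G)} (hs : Fintype.card G ≤ #s)
    (hfst : Set.InjOn Prod.fst (s : Set (G × G))) (hsnd : Set.InjOn Prod.snd (s : Set (G × G)))
    (hadd : Set.InjOn (fun x : G × G => x.1 + x.2) (s : Set (G × G))) :
    ∑ g : G, g = 0 := by
  have h := sum_add_distrib (s := s) (f := Prod.fst) (g := Prod.snd)
  rw [sum_eq_sum_univ_of_injOn hadd hs, sum_eq_sum_univ_of_injOn hfst hs,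
    sum_eq_sum_univ_of_injOn hsnd hs] at h
  exact left_eq_add.mp h

theorem SimpleGraph.IsIndepSet.injOn {V β : Type*} {G : SimpleGraph V} {s : Set V}
    (hs : G.IsIndepSet s) {f : V → β} (hf : ∀ ⦃x y⦄, x ≠ y → f x = f y → G.Adj x y) :
    s.InjOn f :=
  fun _ hx _ hy hxy => by_contra fun hne => hs hx hy hne (hf hne hxy)

theorem cyclicLatinSquareGraph_adj {n : ℕ} {x y : ZMod n × ZMod n} :
    (cyclicLatinSquareGraph n).Adj x y ↔
      x ≠ y ∧ (x.1 = y.1 ∨ x.2 = y.2 ∨ x.1 + x.2 = y.1 + y.2) := by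
  simp only [cyclicLatinSquareGraph, SimpleGraph.fromRel_adj, and_congr_right_iff]
  grind

theorem cyclicLatinSquareGraph.sum_univ_eq_zero_of_isIndepSet {n : ℕ} [NeZero n]
    {s : Finset (ZMod n × ZMod n)} (hs : (cyclicLatinSquareGraph n).IsIndepSet s)
    (hcard : n ≤ #s) : ∑ x : ZMod n, x = 0 :=
  sum_univ_eq_zero_of_transversal (by rwa [ZMod.card])
    (hs.injOn fun _ _ hne h => cyclicLatinSquareGraph_adj.2 ⟨hne, .inl h⟩)
    (hs.injOn fun _ _ hne h => cyclicLatinSquareGraph_adj.2 ⟨hne, .inr (.inl h)⟩)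
    (hs.injOn fun _ _ hne h => cyclicLatinSquareGraph_adj.2 ⟨hne, .inr (.inr h)⟩)

theorem SimpleGraph.le_chromaticNumber_of_not_colorable {V : Type*} {G : SimpleGraph V} {n : ℕ}
    (h : ¬G.Colorable n) : (n + 1 : ℕ∞) ≤ G.chromaticNumber :=
  Order.add_one_le_of_lt <| lt_of_not_ge <| mt chromaticNumber_le_iff_colorable.1 h

theorem cyclic_even_not_colorable_succ (n : ℕ) (hn : 2 ≤ n) (heven : Even n) :
    ¬ (cyclicLatinSquareGraph n).Colorable (n + 1) ∧
      (n + 2 : ℕ∞) ≤ (cyclicLatinSquareGraph n).chromaticNumber := by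
  have : NeZero n := ⟨by omega⟩
  have hcol : ¬ (cyclicLatinSquareGraph n).Colorable (n + 1) := by
    rintro ⟨C⟩
    have hcard : Fintype.card (Fin (n + 1)) * (n - 1) < Fintype.card (ZMod n × ZMod n) := by
      obtain ⟨k, rfl⟩ : ∃ k, n = k + 1 := ⟨n - 1, by omega⟩
      simp only [Fintype.card_fin, Fintype.card_prod, ZMod.card, Nat.add_sub_cancel]
      nlinarith
    obtain ⟨c, hc⟩ := Fintype.exists_lt_card_fiber_of_mul_lt_card (f := C) hcard
    have hindep : (cyclicLatinSquareGraph n).IsIndepSet ({x | C x = c} : Finset _) := by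
      simpa [SimpleGraph.Coloring.colorClass] using C.isIndepSet_colorClass c
    exact ZMod.sum_univ_ne_zero_of_even heven
      (cyclicLatinSquareGraph.sum_univ_eq_zero_of_isIndepSet hindep (by omega))
  refine ⟨hcol, ?_⟩
  calc (n + 2 : ℕ∞) = ((n + 1 : ℕ) : ℕ∞) + 1 := by push_cast; ring
    _ ≤ _ := SimpleGraph.le_chromaticNumber_of_not_colorable hcol
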